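/- In the model H := N_H ∼ N(0,1), D := 𝟙(N_D ≥ 0.2 + 0.6·𝟙(H ≥ 0)) with N_D ∼ Uniform(0,1) independent of N_H, and Y := H − D + D·N_Y − (1−D)·N_Y with N_Y ∼ N(0,1) independent of (N_H, N_D), the interventional CDFs are F₀*(y) = Φ(y/√2) and F₁*(y) = Φ((1+y)/√2), and the iPIT residual D·F₁*(Y) + (1−D)·F₀*(Y) is uniformly distributed on (0,1). -/

import Mathlib

/-!
Since `Y + D = H + (2D - 1)·N_Y` and `D ∈ {0, 1}`, the residual is `Φ((H + S·N_Y)/√2)` with the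
sign `S = 2D - 1` a function of `(H, N_D)`. As `N_Y` is symmetric and independent of `(H, N_D)`,
flipping it by `S` does not change the joint law, so `H + S·N_Y` is `N(0, 2)` like `H + N_Y`.
The residual is therefore `Φ` applied to a standard normal variable, and `Φ` is continuous and
strictly increasing, so the probability integral transform makes it uniform.
-/

open MeasureTheory ProbabilityTheory Set

/-- The standard normal CDF `Φ`. -/
noncomputable def stdNormalCDF (x : ℝ) : ℝ := cdf (gaussianReal 0 1) x

namespace ProbabilityTheory

section CDF

variable {ν : Measure ℝ} [IsProbabilityMeasure ν]

lemma continuous_cdf [NullSingletonClass ν] : Continuous (cdf ν) := by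
  refine continuous_iff_continuousAt.2 fun x => ?_
  rw [(monotone_cdf ν).continuousAt_iff_leftLim_eq_rightLim, StieltjesFunction.rightLim_eq]
  have hatom := (cdf ν).measure_singleton x
  rw [measure_cdf, measure_singleton, eq_comm, ENNReal.ofReal_eq_zero, sub_nonpos] at hatom
  exact le_antisymm ((monotone_cdf ν).leftLim_le le_rfl) hatom

lemma strictMono_cdf_of_absolutelyContinuous (h : volume ≪ ν) : StrictMono (cdf ν) := by
  intro x y hxy
  have hIoc := (cdf ν).measure_Ioc x y
  rw [measure_cdf] at hIoc
  have hne : ν (Ioc x y) ≠ 0 := fun h0 => hxy.not_ge (by simpa using h h0)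
  rwa [hIoc, ne_eq, ENNReal.ofReal_eq_zero, not_le, sub_pos] at hne

lemma map_cdf_eq_restrict_Ioo (hmono : StrictMono (cdf ν)) (hcont : Continuous (cdf ν)) :
    ν.map (cdf ν) = volume.restrict (Ioo 0 1) := by
  have hpos (x : ℝ) : 0 < cdf ν x := (cdf_nonneg ν (x - 1)).trans_lt (hmono (by linarith))
  have hlt (x : ℝ) : cdf ν x < 1 := (hmono (lt_add_one x)).trans_le (cdf_le_one ν _)
  have : IsProbabilityMeasure (volume.restrict (Ioo (0 : ℝ) 1)) := ⟨by simp⟩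
  refine Measure.ext_of_Iic _ _ fun t => ?_
  rw [Measure.map_apply hmono.monotone.measurable measurableSet_Iic,
    Measure.restrict_apply measurableSet_Iic]
  rcases le_or_gt t 0 with ht0 | ht0
  · have hempty : cdf ν ⁻¹' Iic t = ∅ :=
      eq_empty_of_forall_notMem fun x hx => (hpos x).not_ge (le_trans hx ht0)
    have hinter : Iic t ∩ Ioo 0 1 = ∅ := by
      ext; simp only [mem_inter_iff, mem_Iic, mem_Ioo, mem_empty_iff_false]; grind
    rw [hempty, hinter, measure_empty, measure_empty]
  rcases lt_or_ge t 1 with ht1 | ht1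
  · obtain ⟨c, rfl⟩ : ∃ c, cdf ν c = t := by
      obtain ⟨a, ha⟩ := ((tendsto_cdf_atBot ν).eventually_lt_const ht0).exists
      obtain ⟨b, hb⟩ := ((tendsto_cdf_atTop ν).eventually_const_lt ht1).exists
      exact intermediate_value_univ a b hcont ⟨ha.le, hb.le⟩
    have hpre : cdf ν ⁻¹' Iic (cdf ν c) = Iic c := by ext x; simp [hmono.le_iff_le]
    have hinter : Iic (cdf ν c) ∩ Ioo 0 1 = Ioc 0 (cdf ν c) := by
      ext; simp only [mem_inter_iff, mem_Iic, mem_Ioo, mem_Ioc]; grind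
    rw [hpre, hinter, ← ofReal_cdf, Real.volume_Ioc, sub_zero]
  · have huniv : cdf ν ⁻¹' Iic t = univ := eq_univ_of_forall fun x => (hlt x).le.trans ht1
    rw [huniv, measure_univ, inter_eq_right.2 fun x hx => hx.2.le.trans ht1, Real.volume_Ioo]
    norm_num

end CDF

lemma gaussianReal_map_standardize (m : ℝ) {v : NNReal} (hv : v ≠ 0) :
    (gaussianReal m v).map (fun x => (x - m) / Real.sqrt v) = gaussianReal 0 1 := by
  have hcomp : (fun x => (x - m) / Real.sqrt v) = (· / Real.sqrt v) ∘ (· - m) := rfl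
  rw [hcomp, ← Measure.map_map (by fun_prop) (by fun_prop), gaussianReal_map_sub_const,
    gaussianReal_map_div_const, sub_self, zero_div]
  congr
  ext
  simp [Real.sq_sqrt v.coe_nonneg, div_self (NNReal.coe_ne_zero.2 hv)]

lemma gaussianReal_zero_map_const_mul {c : ℝ} (hc : c ^ 2 = 1) (v : NNReal) :
    (gaussianReal 0 v).map (c * ·) = gaussianReal 0 v := by
  rw [gaussianReal_map_const_mul, mul_zero]
  congr
  ext
  simp [hc]

lemma IndepFun.identDistrib_prodMk_apply {Ω α β : Type*} [MeasurableSpace Ω]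
    [MeasurableSpace α] [MeasurableSpace β] {P : Measure Ω} [IsProbabilityMeasure P]
    {X : Ω → α} {Z : Ω → β} (hX : Measurable X) (hZ : Measurable Z) (hXZ : IndepFun X Z P)
    {g : α → β → β} (hg : Measurable (Function.uncurry g))
    (hinv : ∀ x, (P.map Z).map (g x) = P.map Z) :
    IdentDistrib (fun ω => (X ω, g (X ω) (Z ω))) (fun ω => (X ω, Z ω)) P P where
  aemeasurable_fst := (hX.prodMk (hg.comp (hX.prodMk hZ))).aemeasurable
  aemeasurable_snd := (hX.prodMk hZ).aemeasurable
  map_eq := by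
    have hskew := (MeasurePreserving.id (P.map X)).skew_product hg (ae_of_all _ hinv)
    calc P.map (fun ω => (X ω, g (X ω) (Z ω)))
        = (P.map (fun ω => (X ω, Z ω))).map (fun p => (id p.1, g p.1 p.2)) :=
          (Measure.map_map hskew.measurable (hX.prodMk hZ)).symm
      _ = P.map (fun ω => (X ω, Z ω)) := by
          rw [(indepFun_iff_map_prod_eq_prod_map_map hX.aemeasurable hZ.aemeasurable).1 hXZ]
          exact hskew.map_eq

lemma map_add_sign_mul_eq_gaussianReal {Ω α : Type*} [MeasurableSpace Ω] [MeasurableSpace α]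
    {μ : Measure Ω} [IsProbabilityMeasure μ] {X : Ω → α} {Z : Ω → ℝ} {h s : α → ℝ}
    (hX : Measurable X) (hZ : Measurable Z) (hh : Measurable h) (hs : Measurable s)
    (hXZ : IndepFun X Z μ) {m : ℝ} {v w : NNReal}
    (hhX : μ.map (fun ω => h (X ω)) = gaussianReal m v) (hZlaw : μ.map Z = gaussianReal 0 w)
    (hs_sq : ∀ x, s x ^ 2 = 1) :
    μ.map (fun ω => h (X ω) + s (X ω) * Z ω) = gaussianReal m (v + w) := by
  have hflip : IdentDistrib (fun ω => (X ω, s (X ω) * Z ω)) (fun ω => (X ω, Z ω)) μ μ :=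
    hXZ.identDistrib_prodMk_apply hX hZ (g := fun x z => s x * z) (by fun_prop)
      fun x => by rw [hZlaw, gaussianReal_zero_map_const_mul (hs_sq x)]
  have hsum := gaussianReal_add_gaussianReal_of_indepFun (hXZ.comp hh measurable_id) hhX hZlaw
  rw [add_zero] at hsum
  exact ((hflip.comp (u := fun p : α × ℝ => h p.1 + p.2) (by fun_prop)).map_eq).trans hsum

end ProbabilityTheory

lemma measurable_stdNormalCDF : Measurable stdNormalCDF := (monotone_cdf _).measurable

lemma gaussianReal_Iic_eq_stdNormalCDF (m : ℝ) {v : NNReal} (hv : v ≠ 0) (y : ℝ) :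
    gaussianReal m v (Iic y) = ENNReal.ofReal (stdNormalCDF ((y - m) / Real.sqrt v)) := by
  have hsqrt : 0 < Real.sqrt v := Real.sqrt_pos.2 (NNReal.coe_pos.2 (pos_iff_ne_zero.2 hv))
  rw [stdNormalCDF, ofReal_cdf, ← gaussianReal_map_standardize m hv,
    Measure.map_apply (by fun_prop) measurableSet_Iic]
  congr
  ext x
  simp [div_le_div_iff_of_pos_right hsqrt]

lemma map_stdNormalCDF_gaussianReal :
    (gaussianReal 0 1).map stdNormalCDF = volume.restrict (Ioo 0 1) :=
  have := nullSingletonClass_gaussianReal (μ := 0) one_ne_zero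
  map_cdf_eq_restrict_Ioo (strictMono_cdf_of_absolutelyContinuous
    (gaussianReal_absolutelyContinuous' 0 one_ne_zero)) continuous_cdf

lemma map_stdNormalCDF_standardize_eq {Ω : Type*} [MeasurableSpace Ω] {μ : Measure Ω}
    {W : Ω → ℝ} (hW : Measurable W) {m : ℝ} {v : NNReal} (hv : v ≠ 0)
    (hlaw : μ.map W = gaussianReal m v) :
    μ.map (fun ω => stdNormalCDF ((W ω - m) / Real.sqrt v)) = volume.restrict (Ioo 0 1) := by
  have hcomp : (fun ω => stdNormalCDF ((W ω - m) / Real.sqrt v))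
      = stdNormalCDF ∘ (fun x => (x - m) / Real.sqrt v) ∘ W := rfl
  rw [hcomp, ← Measure.map_map measurable_stdNormalCDF (by fun_prop),
    ← Measure.map_map (by fun_prop) hW, hlaw, gaussianReal_map_standardize m hv,
    map_stdNormalCDF_gaussianReal]

lemma ipitResidual_eq {d h n y : ℝ} (hd : d = 0 ∨ d = 1)
    (hy : y = h - d + d * n - (1 - d) * n) :
    d * stdNormalCDF ((1 + y) / Real.sqrt 2) + (1 - d) * stdNormalCDF (y / Real.sqrt 2)
      = stdNormalCDF ((h + (2 * d - 1) * n) / Real.sqrt 2) := by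
  rcases hd with rfl | rfl <;> subst hy <;> ring_nf

lemma map_ipitResidual_eq_restrict_Ioo {Ω : Type*} [MeasurableSpace Ω] {μ : Measure Ω}
    [IsProbabilityMeasure μ] {H ND NY D Y : Ω → ℝ} (hH : Measurable H) (hND : Measurable ND)
    (hNY : Measurable NY) (hindep : IndepFun (fun ω => (H ω, ND ω)) NY μ)
    (hHlaw : μ.map H = gaussianReal 0 1) (hNYlaw : μ.map NY = gaussianReal 0 1)
    {θ : ℝ → ℝ} (hθ : Measurable θ)
    (hD : ∀ ω, D ω = (Ici (θ (H ω))).indicator (fun _ => 1) (ND ω))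
    (hY : ∀ ω, Y ω = H ω - D ω + D ω * NY ω - (1 - D ω) * NY ω) :
    μ.map (fun ω => D ω * stdNormalCDF ((1 + Y ω) / Real.sqrt 2)
        + (1 - D ω) * stdNormalCDF (Y ω / Real.sqrt 2)) = volume.restrict (Ioo 0 1) := by
  set d : ℝ × ℝ → ℝ := fun p => (Ici (θ p.1)).indicator (fun _ => 1) p.2
  have hd01 (p : ℝ × ℝ) : d p = 0 ∨ d p = 1 := indicator_eq_zero_or_self _ _ _
  have hd : Measurable d :=
    measurable_const.indicator (measurableSet_le (hθ.comp measurable_fst) measurable_snd)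
  have hlaw : μ.map (fun ω => H ω + (2 * d (H ω, ND ω) - 1) * NY ω) = gaussianReal 0 (1 + 1) :=
    map_add_sign_mul_eq_gaussianReal (s := fun p => 2 * d p - 1) (hH.prodMk hND) hNY
      measurable_fst (by fun_prop) hindep hHlaw hNYlaw
      fun p => by rcases hd01 p with h | h <;> norm_num [h]
  have huniform := map_stdNormalCDF_standardize_eq (by fun_prop) (by norm_num) hlaw
  simp only [sub_zero, one_add_one_eq_two, NNReal.coe_ofNat] at huniform
  rw [← huniform]
  congr 1 with ω
  have hDd : D ω = d (H ω, ND ω) := hD ω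
  rw [ipitResidual_eq (hDd ▸ hd01 _) (hY ω), hDd]

theorem ipit_uniform_example_general
    {Ω : Type*} [MeasurableSpace Ω] (μ : Measure Ω) [IsProbabilityMeasure μ]
    (H ND NY : Ω → ℝ) (hH : Measurable H) (hND : Measurable ND)
    (hNY : Measurable NY)
    (hindep : iIndepFun (m := fun _ => (inferInstance : MeasurableSpace ℝ)) ![H, ND, NY] μ)
    (hHlaw : μ.map H = gaussianReal 0 1)
    (hNYlaw : μ.map NY = gaussianReal 0 1)
    (D : Ω → ℝ)
    (hD : ∀ ω, D ω = Set.indicator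
      (Ici (0.2 + 0.6 * Set.indicator (Ici (0:ℝ)) (fun _ => (1:ℝ)) (H ω)))
      (fun _ => (1:ℝ)) (ND ω))
    (Y : Ω → ℝ)
    (hY : ∀ ω, Y ω = H ω - D ω + D ω * NY ω - (1 - D ω) * NY ω) :
    (∀ y : ℝ, μ.map (fun ω => H ω - NY ω) (Iic y)
        = ENNReal.ofReal (stdNormalCDF (y / Real.sqrt 2))) ∧
    (∀ y : ℝ, μ.map (fun ω => H ω - 1 + NY ω) (Iic y)
        = ENNReal.ofReal (stdNormalCDF ((1 + y) / Real.sqrt 2))) ∧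
    μ.map (fun ω => D ω * stdNormalCDF ((1 + Y ω) / Real.sqrt 2)
        + (1 - D ω) * stdNormalCDF (Y ω / Real.sqrt 2))
      = volume.restrict (Ioo (0:ℝ) 1) := by
  have hindep' : IndepFun (fun ω => (H ω, ND ω)) NY μ := by
    simpa using hindep.indepFun_prodMk (fun i => by fin_cases i <;> assumption) 0 1 2
      (by decide) (by decide)
  have hHNY : IndepFun H NY μ := hindep'.comp measurable_fst measurable_id
  have hθ : Measurable fun h : ℝ => 0.2 + 0.6 * (Ici (0:ℝ)).indicator (fun _ => (1:ℝ)) h :=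
    measurable_const.add ((measurable_const.indicator measurableSet_Ici).const_mul _)
  refine ⟨fun y => ?_, fun y => ?_,
    map_ipitResidual_eq_restrict_Ioo hH hND hNY hindep' hHlaw hNYlaw hθ hD hY⟩
  · have hdiff := map_add_sign_mul_eq_gaussianReal (h := id) (s := fun _ => -1) hH hNY
      measurable_id measurable_const hHNY hHlaw hNYlaw fun _ => by norm_num
    simp only [id, neg_one_mul, ← sub_eq_add_neg] at hdiff
    rw [hdiff, gaussianReal_Iic_eq_stdNormalCDF 0 (by norm_num)]
    norm_num
  · have hsum := gaussianReal_add_gaussianReal_of_indepFun hHNY hHlaw hNYlaw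
    have hshift : (fun ω => H ω - 1 + NY ω) = (· - 1) ∘ (H + NY) := by
      funext ω
      simp only [Function.comp_apply, Pi.add_apply]
      ring
    rw [hshift, ← Measure.map_map (by fun_prop) (hH.add hNY), hsum, gaussianReal_map_sub_const,
      gaussianReal_Iic_eq_stdNormalCDF _ (by norm_num)]
    norm_num [add_comm]

/-- In the model `H ∼ N(0,1)`, `D = 𝟙(N_D ≥ 0.2 + 0.6·𝟙(H ≥ 0))` with
`N_D ∼ U(0,1)`, `Y = H − D + D·N_Y − (1−D)·N_Y` with `N_Y ∼ N(0,1)`, all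
independent: the interventional CDFs are `F₀*(y) = Φ(y/√2)` and
`F₁*(y) = Φ((1+y)/√2)`, and the iPIT residual
`D·F₁*(Y) + (1−D)·F₀*(Y)` is uniform on `(0,1)`. -/
theorem ipit_uniform_example
    {Ω : Type*} [MeasurableSpace Ω] (μ : Measure Ω) [IsProbabilityMeasure μ]
    (H ND NY : Ω → ℝ) (hH : Measurable H) (hND : Measurable ND)
    (hNY : Measurable NY)
    (hindep : iIndepFun (m := fun _ => (inferInstance : MeasurableSpace ℝ)) ![H, ND, NY] μ)
    (hHlaw : μ.map H = gaussianReal 0 1)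
    (hNDlaw : μ.map ND = volume.restrict (Icc (0:ℝ) 1))
    (hNYlaw : μ.map NY = gaussianReal 0 1)
    (D : Ω → ℝ)
    (hD : ∀ ω, D ω = Set.indicator
      (Ici (0.2 + 0.6 * Set.indicator (Ici (0:ℝ)) (fun _ => (1:ℝ)) (H ω)))
      (fun _ => (1:ℝ)) (ND ω))
    (Y : Ω → ℝ)
    (hY : ∀ ω, Y ω = H ω - D ω + D ω * NY ω - (1 - D ω) * NY ω) :
    (∀ y : ℝ, μ.map (fun ω => H ω - NY ω) (Iic y)
        = ENNReal.ofReal (stdNormalCDF (y / Real.sqrt 2))) ∧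
    (∀ y : ℝ, μ.map (fun ω => H ω - 1 + NY ω) (Iic y)
        = ENNReal.ofReal (stdNormalCDF ((1 + y) / Real.sqrt 2))) ∧
    μ.map (fun ω => D ω * stdNormalCDF ((1 + Y ω) / Real.sqrt 2)
        + (1 - D ω) * stdNormalCDF (Y ω / Real.sqrt 2))
      = volume.restrict (Ioo (0:ℝ) 1) :=
  ipit_uniform_example_general μ H ND NY hH hND hNY hindep hHlaw hNYlaw D hD Y hY
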